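/- Let 0<λ≤1, f ∈ 𝒰(λ) with f(z)/z ≺ 1/((1-z)(1-λz)), and f⁻¹(w)=w+A₂w²+A₃w³+⋯. Then |A₃| ≤ 1+3λ+λ², with equality for f_λ(z)=z/((1-z)(1-λz)). -/

import Mathlib

open Metric Filter Set Topology

/-!
Put `c₁ = ω'(0)` and `c₂ = ω''(0)/2`. Near the origin `f = z/Q` with `Q = (1 - ω)(1 - λω)`, so the
Leibniz rule for `f·Q = z` expresses `f''(0)` and `f'''(0)` through `Q'(0) = -(1+λ)c₁` and
`Q''(0) = 2λc₁² - 2(1+λ)c₂`, and Faà di Bruno's formula for `f ∘ g = id` gives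
`g'''(0) = 3f''(0)² - f'''(0)`. Altogether `A₃ = g'''(0)/6 = (1+3λ+λ²)c₁² - (1+λ)c₂`.

The Schwarz–Pick inequality `|ψ'(0)| ≤ 1 - |ψ(0)|²` for `ψ(z) = ω(z)/z` gives `|c₂| ≤ 1 - |c₁|²`,
hence `|A₃| ≤ (1+3λ+λ²)|c₁|² + (1+λ)(1 - |c₁|²) ≤ 1+3λ+λ²`. For `f_λ` one has `ω = id`, `c₁ = 1`
and `c₂ = 0`, which gives equality.
-/

section Coefficients

variable {𝕜 : Type*} [NontriviallyNormedField 𝕜]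

theorem iteratedDeriv_three_of_comp_eq_id {f g : 𝕜 → 𝕜} {x : 𝕜}
    (hf : ContDiffAt 𝕜 3 f (g x)) (hg : ContDiffAt 𝕜 3 g x)
    (hfg : f ∘ g =ᶠ[𝓝 x] id) (hf₁ : deriv f (g x) = 1) :
    iteratedDeriv 3 g x = 3 * iteratedDeriv 2 f (g x) ^ 2 - iteratedDeriv 3 f (g x) := by
  have hg₁ : deriv g x = 1 := by
    have h := hfg.iteratedDeriv_eq 1
    rw [iteratedDeriv_one, iteratedDeriv_one, deriv_comp x (hf.differentiableAt (by norm_num))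
      (hg.differentiableAt (by norm_num)), hf₁, deriv_id] at h
    simpa using h
  have hg₂ : iteratedDeriv 2 g x = -iteratedDeriv 2 f (g x) := by
    have h := hfg.iteratedDeriv_eq 2
    rw [iteratedDeriv_comp_two (hf.of_le (by norm_num)) (hg.of_le (by norm_num)),
      hf₁, hg₁] at h
    norm_num [iteratedDeriv_id] at h
    linear_combination h
  have h := hfg.iteratedDeriv_eq 3
  rw [iteratedDeriv_comp_three hf hg, hf₁, hg₁, hg₂] at h
  norm_num [iteratedDeriv_id] at h
  linear_combination h

theorem iteratedDeriv_one_sub_mul_one_sub (lam : 𝕜) {ω : 𝕜 → 𝕜} {x : 𝕜}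
    (hω : ContDiffAt 𝕜 2 ω x) (hω₀ : ω x = 0) :
    deriv (fun z => (1 - ω z) * (1 - lam * ω z)) x = -(1 + lam) * deriv ω x ∧
      iteratedDeriv 2 (fun z => (1 - ω z) * (1 - lam * ω z)) x =
        2 * lam * deriv ω x ^ 2 - (1 + lam) * iteratedDeriv 2 ω x := by
  have hu : ContDiffAt 𝕜 2 (fun z => 1 - ω z) x := contDiffAt_const.sub hω
  have hv : ContDiffAt 𝕜 2 (fun z => 1 - lam * ω z) x :=
    contDiffAt_const.sub (contDiffAt_const.mul hω)
  have h₁ := iteratedDeriv_fun_mul (hu.of_le (by norm_num)) (hv.of_le (by norm_num)) (n := 1)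
  have h₂ := iteratedDeriv_fun_mul hu hv
  norm_num [Finset.sum_range_succ, iteratedDeriv_const_sub, hω₀] at h₁ h₂
  exact ⟨by linear_combination h₁, by linear_combination h₂⟩

theorem iteratedDeriv_of_eventuallyEq_id_div {F Q : 𝕜 → 𝕜} (hQ : ContDiffAt 𝕜 3 Q 0)
    (hQ₀ : Q 0 = 1) (hF : F =ᶠ[𝓝 0] fun z => z / Q z) :
    ContDiffAt 𝕜 3 F 0 ∧ deriv F 0 = 1 ∧ iteratedDeriv 2 F 0 = -2 * deriv Q 0 ∧
      iteratedDeriv 3 F 0 = 6 * deriv Q 0 ^ 2 - 3 * iteratedDeriv 2 Q 0 := by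
  have hFc : ContDiffAt 𝕜 3 F 0 :=
    (contDiffAt_id.div hQ (by simp [hQ₀])).congr_of_eventuallyEq hF
  have hFQ : F * Q =ᶠ[𝓝 0] id := by
    filter_upwards [hF, hQ.continuousAt.eventually_ne (by simp [hQ₀] : Q 0 ≠ 0)] with z hz hQz
    simp [hz, hQz]
  have hF₀ : F 0 = 0 := by simpa [hQ₀] using hFQ.eq_of_nhds
  have leibniz (n : ℕ) (hn : n ≤ 3) := (hFQ.iteratedDeriv_eq n).symm.trans
    (iteratedDeriv_mul (hFc.of_le (by exact_mod_cast hn)) (hQ.of_le (by exact_mod_cast hn)))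
  have h₁ := leibniz 1 (by norm_num)
  have h₂ := leibniz 2 (by norm_num)
  have h₃ := leibniz 3 (by norm_num)
  norm_num [Finset.sum_range_succ, iteratedDeriv_id, hF₀, hQ₀] at h₁ h₂ h₃
  rw [← h₁] at h₂ h₃
  exact ⟨hFc, h₁.symm, by linear_combination -h₂,
    by linear_combination -h₃ + 3 * deriv Q 0 * h₂⟩

theorem iteratedDeriv_three_inverse_of_subordination (lam : 𝕜) {ω f g : 𝕜 → 𝕜}
    (hω : ContDiffAt 𝕜 3 ω 0) (hω₀ : ω 0 = 0)
    (hf : f =ᶠ[𝓝 0] fun z => z / ((1 - ω z) * (1 - lam * ω z)))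
    (hg : ContDiffAt 𝕜 3 g 0) (hg₀ : g 0 = 0) (hfg : f ∘ g =ᶠ[𝓝 0] id) :
    iteratedDeriv 3 g 0 =
      6 * (1 + 3 * lam + lam ^ 2) * deriv ω 0 ^ 2 - 3 * (1 + lam) * iteratedDeriv 2 ω 0 := by
  obtain ⟨hQ₁, hQ₂⟩ := iteratedDeriv_one_sub_mul_one_sub lam (hω.of_le (by norm_num)) hω₀
  have hQ : ContDiffAt 𝕜 3 (fun z => (1 - ω z) * (1 - lam * ω z)) 0 :=
    (contDiffAt_const.sub hω).mul (contDiffAt_const.sub (contDiffAt_const.mul hω))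
  obtain ⟨hfc, hf₁, hf₂, hf₃⟩ := iteratedDeriv_of_eventuallyEq_id_div hQ (by simp [hω₀]) hf
  rw [← hg₀] at hfc hf₁
  rw [iteratedDeriv_three_of_comp_eq_id hfc hg hfg hf₁, hg₀, hf₂, hf₃, hQ₁, hQ₂]
  ring

end Coefficients

theorem norm_sub_le_norm_one_sub_conj_mul {a w : ℂ} (ha : ‖a‖ ≤ 1) (hw : ‖w‖ ≤ 1) :
    ‖w - a‖ ≤ ‖1 - starRingEnd ℂ a * w‖ := by
  have hnormSq : Complex.normSq (1 - starRingEnd ℂ a * w) - Complex.normSq (w - a) =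
      (1 - Complex.normSq a) * (1 - Complex.normSq w) := by
    simp only [Complex.normSq_apply, Complex.sub_re, Complex.sub_im, Complex.mul_re,
      Complex.mul_im, Complex.conj_re, Complex.conj_im, Complex.one_re, Complex.one_im]
    ring
  rw [← Complex.sq_norm, ← Complex.sq_norm, ← Complex.sq_norm, ← Complex.sq_norm] at hnormSq
  have hnonneg : 0 ≤ (1 - ‖a‖ ^ 2) * (1 - ‖w‖ ^ 2) :=
    mul_nonneg (by nlinarith [norm_nonneg a]) (by nlinarith [norm_nonneg w])
  exact (sq_le_sq₀ (norm_nonneg _) (norm_nonneg _)).1 (by linarith)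

theorem norm_deriv_zero_le_one_sub_sq {ψ : ℂ → ℂ} (hd : DifferentiableOn ℂ ψ (ball 0 1))
    (hψ : MapsTo ψ (ball 0 1) (closedBall 0 1)) :
    ‖deriv ψ 0‖ ≤ 1 - ‖ψ 0‖ ^ 2 := by
  have h₀ : (0 : ℂ) ∈ ball (0 : ℂ) 1 := mem_ball_self one_pos
  have hψ₀ : DifferentiableAt ℂ ψ 0 := hd.differentiableAt (ball_mem_nhds 0 one_pos)
  set a := ψ 0 with ha_def
  rcases (mem_closedBall_zero_iff.1 (hψ h₀)).lt_or_eq with ha | ha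
  · have hden : ∀ z ∈ ball (0 : ℂ) 1, 1 - starRingEnd ℂ a * ψ z ≠ 0 := by
      intro z hz h
      have hlt : ‖starRingEnd ℂ a * ψ z‖ < 1 := by
        rw [norm_mul, RCLike.norm_conj]
        exact (mul_le_of_le_one_right (norm_nonneg a)
          (mem_closedBall_zero_iff.1 (hψ hz))).trans_lt ha
      rw [← sub_eq_zero.1 h, norm_one] at hlt
      exact hlt.false
    set φ : ℂ → ℂ := fun z => (ψ z - a) / (1 - starRingEnd ℂ a * ψ z)
    have hφd : DifferentiableOn ℂ φ (ball 0 1) :=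
      (hd.sub_const a).div ((differentiableOn_const 1).sub (hd.const_mul _)) hden
    have hφ : MapsTo φ (ball 0 1) (closedBall (φ 0) 1) := by
      intro z hz
      rw [mem_closedBall, dist_eq_norm, show φ 0 = 0 by simp [φ, ← ha_def], sub_zero, norm_div]
      exact div_le_one_of_le₀ (norm_sub_le_norm_one_sub_conj_mul ha.le
        (mem_closedBall_zero_iff.1 (hψ hz))) (norm_nonneg _)
    have hφ' : deriv φ 0 = deriv ψ 0 / (1 - ‖a‖ ^ 2 : ℝ) := by
      have h : HasDerivAt φ _ 0 := (hψ₀.hasDerivAt.sub_const a).div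
        ((hψ₀.hasDerivAt.const_mul (starRingEnd ℂ a)).const_sub 1) (hden 0 h₀)
      have hden₀ := hden 0 h₀
      rw [← ha_def, Complex.conj_mul'] at hden₀
      rw [h.deriv, ← ha_def, Complex.conj_mul']
      push_cast
      field_simp
      ring
    have hpos : 0 < 1 - ‖a‖ ^ 2 := by nlinarith [norm_nonneg a]
    have hSchwarz := Complex.norm_deriv_le_one_of_mapsTo_ball hφd hφ one_pos
    rwa [hφ', norm_div, Complex.norm_real, Real.norm_of_nonneg hpos.le, div_le_one hpos]
      at hSchwarz
  · have hmax : IsMaxOn (norm ∘ ψ) (ball 0 1) 0 := fun z hz =>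
      (mem_closedBall_zero_iff.1 (hψ hz)).trans ha.ge
    have hconst := Complex.eqOn_of_isPreconnected_of_isMaxOn_norm
      (convex_ball (0 : ℂ) 1).isPreconnected isOpen_ball hd h₀ hmax
    rw [(hconst.eventuallyEq_of_mem (ball_mem_nhds 0 one_pos)).deriv_eq, ha,
      show deriv (Function.const ℂ a) 0 = 0 from deriv_const 0 a]
    norm_num

theorem norm_iteratedDeriv_two_div_two_le {ω : ℂ → ℂ} (hd : DifferentiableOn ℂ ω (ball 0 1))
    (hω₀ : ω 0 = 0) (hω : MapsTo ω (ball 0 1) (closedBall 0 1)) :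
    ‖iteratedDeriv 2 ω 0 / 2‖ ≤ 1 - ‖deriv ω 0‖ ^ 2 := by
  have hball : ball (0 : ℂ) 1 ∈ 𝓝 0 := ball_mem_nhds 0 one_pos
  set ψ := dslope ω 0
  have hψd : DifferentiableOn ℂ ψ (ball 0 1) := (Complex.differentiableOn_dslope hball).2 hd
  have hψ : MapsTo ψ (ball 0 1) (closedBall 0 1) := fun z hz => by
    have hω' : MapsTo ω (ball 0 1) (closedBall (ω 0) 1) := by rwa [hω₀]
    simpa using Complex.norm_dslope_le_div_of_mapsTo_ball hd hω' hz
  have hωψ : ω = fun z => z * ψ z := funext fun z => by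
    simpa [hω₀] using (sub_smul_dslope ω 0 z).symm
  have h₂ : iteratedDeriv 2 ω 0 = 2 * deriv ψ 0 := by
    rw [hωψ, iteratedDeriv_fun_mul contDiffAt_fun_id (hψd.analyticAt hball).contDiffAt]
    simp [iteratedDeriv_fun_id_zero]
  rw [h₂, mul_div_cancel_left₀ _ two_ne_zero, ← dslope_same ω 0]
  exact norm_deriv_zero_le_one_sub_sq hψd hψ

theorem norm_mul_sq_sub_mul_le {a b : ℝ} {c₁ c₂ : ℂ} (hb : 0 ≤ b) (hba : b ≤ a)
    (hc : ‖c₂‖ ≤ 1 - ‖c₁‖ ^ 2) :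
    ‖a * c₁ ^ 2 - b * c₂‖ ≤ a := by
  calc ‖a * c₁ ^ 2 - b * c₂‖ ≤ a * ‖c₁‖ ^ 2 + b * ‖c₂‖ := by
        refine (norm_sub_le _ _).trans_eq ?_
        rw [norm_mul, norm_mul, norm_pow, Complex.norm_real, Complex.norm_real,
          Real.norm_of_nonneg hb, Real.norm_of_nonneg (hb.trans hba)]
    _ ≤ a * ‖c₁‖ ^ 2 + a * (1 - ‖c₁‖ ^ 2) := by
      linarith [mul_le_mul hba hc (norm_nonneg _) (hb.trans hba)]
    _ = a := by ring

theorem A3_bound_general (lam : ℝ) (hl0 : 0 < lam)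
    (f : ℂ → ℂ)
    (ω : ℂ → ℂ)
    (hω : DifferentiableOn ℂ ω (ball (0:ℂ) 1))
    (hω0 : ω 0 = 0)
    (hωb : ∀ z ∈ ball (0:ℂ) 1, ‖ω z‖ < 1)
    (hsub : ∀ z ∈ ball (0:ℂ) 1, f z = z / ((1 - ω z) * (1 - (lam:ℂ) * ω z)))
    (g : ℂ → ℂ)
    (hg : AnalyticAt ℂ g 0) (hg0 : g 0 = 0)
    (hinv : ∀ᶠ w in nhds (0:ℂ), f (g w) = w)
    (A₃ : ℂ) (hA₃ : A₃ = iteratedDeriv 3 g 0 / 6) :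
    ‖A₃‖ ≤ 1 + 3*lam + lam^2 ∧
    (∀ gl : ℂ → ℂ, AnalyticAt ℂ gl 0 → gl 0 = 0 →
      (∀ᶠ w in nhds (0:ℂ), gl w / ((1 - gl w) * (1 - (lam:ℂ) * gl w)) = w) →
      ‖iteratedDeriv 3 gl 0 / 6‖ = 1 + 3*lam + lam^2) := by
  have hball : ball (0:ℂ) 1 ∈ 𝓝 0 := ball_mem_nhds 0 one_pos
  constructor
  · have hf : f =ᶠ[𝓝 0] fun z => z / ((1 - ω z) * (1 - (lam:ℂ) * ω z)) :=
      eventually_of_mem hball hsub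
    have hω₂ := norm_iteratedDeriv_two_div_two_le hω hω0
      (fun z hz => mem_closedBall_zero_iff.2 (hωb z hz).le)
    rw [hA₃, iteratedDeriv_three_inverse_of_subordination (lam:ℂ)
      (hω.analyticAt hball).contDiffAt hω0 hf hg.contDiffAt hg0 hinv]
    convert norm_mul_sq_sub_mul_le (a := 1 + 3 * lam + lam ^ 2) (b := 1 + lam)
      (by positivity) (by nlinarith) hω₂ using 2
    push_cast
    ring
  · intro gl hgl hgl0 hglinv
    rw [iteratedDeriv_three_inverse_of_subordination (lam:ℂ) contDiffAt_id rfl EventuallyEq.rfl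
      hgl.contDiffAt hgl0 hglinv]
    norm_num [iteratedDeriv_id]
    exact_mod_cast Complex.norm_of_nonneg (by positivity : 0 ≤ 1 + 3 * lam + lam ^ 2)

/-- For f ∈ 𝒰(λ) with f(z)/z ≺ 1/((1-z)(1-λz)), the third coefficient of the
inverse satisfies |A₃| ≤ 1+3λ+λ², with equality for f_λ(z)=z/((1-z)(1-λz)). -/
theorem A3_bound (lam : ℝ) (hl0 : 0 < lam) (hl1 : lam ≤ 1)
    (f : ℂ → ℂ)
    (hf : DifferentiableOn ℂ f (ball (0:ℂ) 1))
    (hf0 : f 0 = 0) (hf1 : deriv f 0 = 1)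
    (hU : ∀ z ∈ ball (0:ℂ) 1, z ≠ 0 →
      ‖(z / f z) ^ 2 * deriv f z - 1‖ < lam)
    (ω : ℂ → ℂ)
    (hω : DifferentiableOn ℂ ω (ball (0:ℂ) 1))
    (hω0 : ω 0 = 0)
    (hωb : ∀ z ∈ ball (0:ℂ) 1, ‖ω z‖ < 1)
    (hsub : ∀ z ∈ ball (0:ℂ) 1, f z = z / ((1 - ω z) * (1 - (lam:ℂ) * ω z)))
    (g : ℂ → ℂ)
    (hg : AnalyticAt ℂ g 0) (hg0 : g 0 = 0)
    (hinv : ∀ᶠ w in nhds (0:ℂ), f (g w) = w)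
    (A₃ : ℂ) (hA₃ : A₃ = iteratedDeriv 3 g 0 / 6) :
    ‖A₃‖ ≤ 1 + 3*lam + lam^2 ∧
    (∀ gl : ℂ → ℂ, AnalyticAt ℂ gl 0 → gl 0 = 0 →
      (∀ᶠ w in nhds (0:ℂ), gl w / ((1 - gl w) * (1 - (lam:ℂ) * gl w)) = w) →
      ‖iteratedDeriv 3 gl 0 / 6‖ = 1 + 3*lam + lam^2) :=
  A3_bound_general lam hl0 f ω hω hω0 hωb hsub g hg hg0 hinv A₃ hA₃
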